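/- arXiv:1909.12215 — 2 statements merged into one kernel-verified Lean document; each statement's English description precedes it below -/
import Mathlib

section
/- Let θ be a unital partial action of a finite groupoid 𝒢 on a ring A = ⊕_{y∈𝒢₀} A_y with A_g = A·1_g for central idempotents 1_g. Define Γ' : A ⊗_{A^θ} A → A ⋆_θ 𝒢 by Γ'(a ⊗ b) = Σ_{g∈𝒢} a θ_g(b 1_{g⁻¹}) δ_g. Then A is a θ-partial Galois extension of A^θ (i.e. there exist a_i, b_i ∈ A, 1 ≤ i ≤ r, with Σ_i a_i θ_g(b_i 1_{g⁻¹}) = δ_{y,g} 1_y for all y ∈ 𝒢₀ and g ∈ 𝒢, Kronecker delta) if Γ' is surjective onto elements of the form 1_y δ_y; conversely, if A is a θ-partial Galois extension then Γ' is surjective. -/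
open CategoryTheory

universe u v

def IsIdealIn {A : Type u} [NonUnitalRing A] (S T : Set A) : Prop :=
  S ⊆ T ∧ (0 : A) ∈ S ∧ (∀ a ∈ S, ∀ b ∈ S, a + b ∈ S) ∧ (∀ a ∈ S, -a ∈ S) ∧
    ∀ t ∈ T, ∀ s ∈ S, t * s ∈ S ∧ s * t ∈ S

structure PartialAction (G : Type v) [Groupoid G] (A : Type u) [NonUnitalRing A] where
  D : ∀ {x y : G}, (x ⟶ y) → Set A
  act : ∀ {x y : G}, (x ⟶ y) → A → A
  ideal_base : ∀ y : G, IsIdealIn (D (𝟙 y)) Set.univ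
  ideal_dom : ∀ {x y : G} (g : x ⟶ y), IsIdealIn (D g) (D (𝟙 y))
  act_mem : ∀ {x y : G} (g : x ⟶ y), ∀ a ∈ D (Groupoid.inv g), act g a ∈ D g
  act_add : ∀ {x y : G} (g : x ⟶ y), ∀ a ∈ D (Groupoid.inv g), ∀ b ∈ D (Groupoid.inv g),
    act g (a + b) = act g a + act g b
  act_mul : ∀ {x y : G} (g : x ⟶ y), ∀ a ∈ D (Groupoid.inv g), ∀ b ∈ D (Groupoid.inv g),
    act g (a * b) = act g a * act g b
  act_inj : ∀ {x y : G} (g : x ⟶ y), ∀ a ∈ D (Groupoid.inv g), ∀ b ∈ D (Groupoid.inv g),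
    act g a = act g b → a = b
  act_surj : ∀ {x y : G} (g : x ⟶ y), ∀ c ∈ D g, ∃ a ∈ D (Groupoid.inv g), act g a = c
  act_id : ∀ y : G, ∀ a ∈ D (𝟙 y), act (𝟙 y) a = a
  mem_comp : ∀ {w x y : G} (g : x ⟶ y) (h : w ⟶ x), ∀ a ∈ D (Groupoid.inv h),
    act h a ∈ D (Groupoid.inv g) ∩ D h → a ∈ D (Groupoid.inv (h ≫ g))
  act_comp : ∀ {w x y : G} (g : x ⟶ y) (h : w ⟶ x), ∀ a ∈ D (Groupoid.inv h),
    act h a ∈ D (Groupoid.inv g) ∩ D h → act g (act h a) = act (h ≫ g) a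

def IsId {G : Type v} [Groupoid G] {y z : G} (g : y ⟶ z) : Prop :=
  ∃ h : y = z, g = eqToHom h

/-- The set of morphisms of a groupoid `G`, as a sigma type. -/
abbrev Mor (G : Type v) [Groupoid G] := Σ y z : G, y ⟶ z

/-- Elements of the partial skew groupoid ring `A ⋆_θ 𝒢`. -/
def skewSet {G : Type v} [Groupoid G] {A : Type u} [NonUnitalRing A]
    (θ : PartialAction G A) : Set (Mor G → A) :=
  {r | ∀ p : Mor G, r p ∈ θ.D p.2.2}

set_option linter.unusedSectionVars false

namespace Stmt16Aux

variable {G : Type v} [Groupoid G] {A : Type u} [NonUnitalRing A]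

lemma ginv_inv {y z : G} (g : y ⟶ z) : Groupoid.inv (Groupoid.inv g) = g := by
  rw [Groupoid.inv_eq_inv, Groupoid.inv_eq_inv, IsIso.inv_inv]

variable {θ : PartialAction G A} {e : ∀ {y z : G}, (y ⟶ z) → A}

section

variable (hDe : ∀ {y z : G} (g : y ⟶ z), θ.D g = {a : A | ∃ b : A, a = b * e g})
variable (he_idem : ∀ {y z : G} (g : y ⟶ z), e g * e g = e g)
variable (he_cent : ∀ {y z : G} (g : y ⟶ z) (b : A), e g * b = b * e g)

include hDe he_idem

lemma memD_iff {y z : G} (g : y ⟶ z) (x : A) : x ∈ θ.D g ↔ x * e g = x := by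
  rw [hDe g]
  simp only [Set.mem_setOf_eq]
  constructor
  · rintro ⟨b, rfl⟩; rw [mul_assoc, he_idem]
  · intro h; exact ⟨x, h.symm⟩

lemma e_memD {y z : G} (g : y ⟶ z) : e g ∈ θ.D g :=
  (memD_iff hDe he_idem g _).2 (he_idem g)

lemma zero_memD {y z : G} (g : y ⟶ z) : (0 : A) ∈ θ.D g :=
  (memD_iff hDe he_idem g _).2 (zero_mul _)

lemma act_zero {y z : G} (g : y ⟶ z) : θ.act g 0 = 0 := by
  have h0 : (0 : A) ∈ θ.D (Groupoid.inv g) := zero_memD hDe he_idem _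
  have h := θ.act_add g 0 h0 0 h0
  rw [add_zero] at h
  exact (left_eq_add.mp h)

lemma sum_memD {ι : Type*} (s : Finset ι) (f : ι → A) {y z : G} (g : y ⟶ z)
    (hf : ∀ i ∈ s, f i ∈ θ.D g) : (∑ i ∈ s, f i) ∈ θ.D g := by
  rw [memD_iff hDe he_idem, Finset.sum_mul]
  exact Finset.sum_congr rfl fun i hi => (memD_iff hDe he_idem g _).1 (hf i hi)

lemma act_sum {ι : Type*} (s : Finset ι) (f : ι → A) {y z : G} (g : y ⟶ z)
    (hf : ∀ i ∈ s, f i ∈ θ.D (Groupoid.inv g)) :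
    θ.act g (∑ i ∈ s, f i) = ∑ i ∈ s, θ.act g (f i) := by
  classical
  induction s using Finset.cons_induction with
  | empty => simpa using act_zero hDe he_idem g
  | cons i s hi ih =>
      rw [Finset.sum_cons, θ.act_add g _ (hf i (Finset.mem_cons_self i s))
        _ (sum_memD hDe he_idem s f _ fun j hj => hf j (Finset.mem_cons_of_mem hj)),
        ih fun j hj => hf j (Finset.mem_cons_of_mem hj), Finset.sum_cons]

lemma D_sub {y z : G} (g : y ⟶ z) : θ.D g ⊆ θ.D (𝟙 z) := (θ.ideal_dom g).1

lemma act_invact {y z : G} (g : y ⟶ z) (w : A) (hw : w ∈ θ.D g) :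
    θ.act g (θ.act (Groupoid.inv g) w) = w := by
  have hw' : w ∈ θ.D (Groupoid.inv (Groupoid.inv g)) := by rw [ginv_inv]; exact hw
  have h1 : θ.act (Groupoid.inv g) w ∈ θ.D (Groupoid.inv g) := θ.act_mem _ w hw'
  have h2 := θ.act_comp g (Groupoid.inv g) w hw' ⟨h1, h1⟩
  rw [Groupoid.inv_comp] at h2
  rw [h2, θ.act_id z w (D_sub hDe he_idem g hw)]

lemma actinv_mem {y z : G} (g : y ⟶ z) (w : A) (hw : w ∈ θ.D g) :
    θ.act (Groupoid.inv g) w ∈ θ.D (Groupoid.inv g) :=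
  θ.act_mem _ w (by rw [ginv_inv]; exact hw)

include he_cent

/-- The core computation: the sum `∑ᵢ (c·θ_{h0}(aᵢ 1_{h0⁻¹}))·θ_g(bᵢ 1_{g⁻¹})` collapses to
`c · θ_{h0}((∑ᵢ aᵢ θ_k(bᵢ 1_{k⁻¹})) · s)` where `k = g ≫ h0⁻¹`. -/
lemma compute {y z y' : G} (g : y ⟶ z) (h0 : y' ⟶ z) {n : ℕ} (a b : Fin n → A)
    (c : A) :
    ∑ i, (c * θ.act h0 (a i * e (Groupoid.inv h0))) * θ.act g (b i * e (Groupoid.inv g))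
      = c * θ.act h0 ((∑ i, a i * θ.act (g ≫ Groupoid.inv h0)
            (b i * e (Groupoid.inv (g ≫ Groupoid.inv h0)))) *
          (e (Groupoid.inv h0) * θ.act (g ≫ Groupoid.inv h0)
            (e (Groupoid.inv g) * θ.act (Groupoid.inv g) (e h0 * e g)))) := by
  have memD := fun {y z : G} (g : y ⟶ z) (x : A) => memD_iff (θ := θ) hDe he_idem g x
  set k : y ⟶ y' := g ≫ Groupoid.inv h0 with hk
  set m : A := θ.act (Groupoid.inv g) (e h0 * e g) with hmdef
  -- memberships for m
  have hm_g : e h0 * e g ∈ θ.D g := by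
    rw [memD, mul_assoc, he_idem]
  have hm_h : e h0 * e g ∈ θ.D h0 := by
    rw [memD, mul_assoc, ← he_cent h0 (e g), ← mul_assoc, he_idem]
  have hm : m ∈ θ.D (Groupoid.inv g) := actinv_mem hDe he_idem g _ hm_g
  have hgm : θ.act g m = e h0 * e g := act_invact hDe he_idem g _ hm_g
  have hm_k : m ∈ θ.D (Groupoid.inv k) := by
    refine θ.mem_comp (Groupoid.inv h0) g m hm ?_
    rw [hgm, ginv_inv]
    exact ⟨hm_h, hm_g⟩
  set q : A := e (Groupoid.inv g) * m with hqdef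
  have hq : q ∈ θ.D (Groupoid.inv k) := by
    rw [memD, hqdef, mul_assoc, (memD _ _).1 hm_k]
  set s : A := e (Groupoid.inv h0) * θ.act k q with hsdef
  have hs : s ∈ θ.D (Groupoid.inv h0) := by
    rw [memD, hsdef, mul_assoc, ← he_cent (Groupoid.inv h0), ← mul_assoc, he_idem]
  -- the term-by-term computation
  have hterm : ∀ i : Fin n,
      (c * θ.act h0 (a i * e (Groupoid.inv h0))) * θ.act g (b i * e (Groupoid.inv g))
        = c * θ.act h0 ((a i * θ.act k (b i * e (Groupoid.inv k))) * s) := by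
    intro i
    have ha : a i * e (Groupoid.inv h0) ∈ θ.D (Groupoid.inv h0) := by
      rw [memD, mul_assoc, he_idem]
    have hx : b i * e (Groupoid.inv g) ∈ θ.D (Groupoid.inv g) := by
      rw [memD, mul_assoc, he_idem]
    have hbk : b i * e (Groupoid.inv k) ∈ θ.D (Groupoid.inv k) := by
      rw [memD, mul_assoc, he_idem]
    set u : A := θ.act h0 (a i * e (Groupoid.inv h0)) with hudef
    set v : A := θ.act g (b i * e (Groupoid.inv g)) with hvdef
    have hu : u ∈ θ.D h0 := θ.act_mem h0 _ ha
    have hv : v ∈ θ.D g := θ.act_mem g _ hx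
    set w : A := e h0 * v with hwdef
    have hw_g : w ∈ θ.D g := by rw [memD, hwdef, mul_assoc, (memD _ _).1 hv]
    have hw_h : w ∈ θ.D h0 := by
      rw [memD, hwdef, mul_assoc, ← he_cent h0 v, ← mul_assoc, he_idem]
    set ci : A := (b i * e (Groupoid.inv g)) * m with hcidef
    have hci : ci ∈ θ.D (Groupoid.inv g) := by
      rw [memD, hcidef, mul_assoc, (memD _ _).1 hm]
    have hθci : θ.act g ci = w := by
      rw [hcidef, θ.act_mul g _ hx _ hm, hgm, ← hvdef, ← mul_assoc,
        ← he_cent h0 v, mul_assoc, (memD _ _).1 hv, hwdef]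
    have hcond : θ.act g ci ∈ θ.D (Groupoid.inv (Groupoid.inv h0)) ∩ θ.D g := by
      rw [hθci, ginv_inv]; exact ⟨hw_h, hw_g⟩
    have hck : ci ∈ θ.D (Groupoid.inv k) := θ.mem_comp (Groupoid.inv h0) g ci hci hcond
    have hwk : θ.act (Groupoid.inv h0) w = θ.act k ci := by
      have := θ.act_comp (Groupoid.inv h0) g ci hci hcond
      rw [hθci] at this
      rw [this, hk]
    have hdecomp : ci = (b i * e (Groupoid.inv k)) * q := by
      rw [← (memD _ _).1 hck]
      rw [hcidef, hqdef]
      calc b i * e (Groupoid.inv g) * m * e (Groupoid.inv k)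
          = b i * e (Groupoid.inv g) * (m * e (Groupoid.inv k)) := by rw [mul_assoc]
        _ = b i * e (Groupoid.inv g) * (e (Groupoid.inv k) * m) := by
              rw [he_cent (Groupoid.inv k) m]
        _ = b i * (e (Groupoid.inv g) * (e (Groupoid.inv k) * m)) := by rw [mul_assoc]
        _ = b i * ((e (Groupoid.inv g) * e (Groupoid.inv k)) * m) := by rw [mul_assoc]
        _ = b i * ((e (Groupoid.inv k) * e (Groupoid.inv g)) * m) := by
              rw [he_cent (Groupoid.inv g) (e (Groupoid.inv k))]
        _ = b i * (e (Groupoid.inv k) * (e (Groupoid.inv g) * m)) := by rw [mul_assoc]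
        _ = (b i * e (Groupoid.inv k)) * (e (Groupoid.inv g) * m) := by rw [mul_assoc]
    have hθk : θ.act k ci = θ.act k (b i * e (Groupoid.inv k)) * θ.act k q := by
      rw [hdecomp]; exact θ.act_mul k _ hbk _ hq
    have hw' : θ.act (Groupoid.inv h0) w ∈ θ.D (Groupoid.inv h0) :=
      actinv_mem hDe he_idem h0 w hw_h
    calc (c * u) * v
        = c * (u * v) := by rw [mul_assoc]
      _ = c * ((u * e h0) * v) := by rw [(memD _ _).1 hu]
      _ = c * (u * w) := by rw [mul_assoc, hwdef]
      _ = c * (u * θ.act h0 (θ.act (Groupoid.inv h0) w)) := by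
            rw [act_invact hDe he_idem h0 w hw_h]
      _ = c * θ.act h0 ((a i * e (Groupoid.inv h0)) * θ.act (Groupoid.inv h0) w) := by
            rw [θ.act_mul h0 _ ha _ hw', hudef]
      _ = c * θ.act h0 ((a i * e (Groupoid.inv h0)) *
            (θ.act k (b i * e (Groupoid.inv k)) * θ.act k q)) := by
            rw [hwk, hθk]
      _ = c * θ.act h0 ((a i * θ.act k (b i * e (Groupoid.inv k))) * s) := by
            rw [hsdef]
            congr 2
            calc a i * e (Groupoid.inv h0) *
                  (θ.act k (b i * e (Groupoid.inv k)) * θ.act k q)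
                = a i * (e (Groupoid.inv h0) *
                  (θ.act k (b i * e (Groupoid.inv k)) * θ.act k q)) := by rw [mul_assoc]
              _ = a i * ((e (Groupoid.inv h0) * θ.act k (b i * e (Groupoid.inv k))) *
                  θ.act k q) := by rw [mul_assoc]
              _ = a i * ((θ.act k (b i * e (Groupoid.inv k)) * e (Groupoid.inv h0)) *
                  θ.act k q) := by rw [he_cent (Groupoid.inv h0)]
              _ = a i * (θ.act k (b i * e (Groupoid.inv k)) *
                  (e (Groupoid.inv h0) * θ.act k q)) := by rw [mul_assoc]
              _ = (a i * θ.act k (b i * e (Groupoid.inv k))) *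
                  (e (Groupoid.inv h0) * θ.act k q) := by rw [mul_assoc]
  calc ∑ i, (c * θ.act h0 (a i * e (Groupoid.inv h0))) * θ.act g (b i * e (Groupoid.inv g))
      = ∑ i, c * θ.act h0 ((a i * θ.act k (b i * e (Groupoid.inv k))) * s) := by
        exact Finset.sum_congr rfl fun i _ => hterm i
    _ = c * ∑ i, θ.act h0 ((a i * θ.act k (b i * e (Groupoid.inv k))) * s) := by
        rw [Finset.mul_sum]
    _ = c * θ.act h0 (∑ i, (a i * θ.act k (b i * e (Groupoid.inv k))) * s) := by
        rw [act_sum hDe he_idem Finset.univ _ h0 fun i _ => by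
          rw [memD_iff hDe he_idem, mul_assoc, (memD_iff hDe he_idem _ _).1 hs]]
    _ = c * θ.act h0 ((∑ i, a i * θ.act k (b i * e (Groupoid.inv k))) * s) := by
        rw [Finset.sum_mul]

lemma key_ne {y z y' : G} (g : y ⟶ z) (h0 : y' ⟶ z) {n : ℕ} (a b : Fin n → A)
    (hGal2 : ∀ {u v : G} (j : u ⟶ v), ¬ IsId j →
      ∑ i, a i * θ.act j (b i * e (Groupoid.inv j)) = 0)
    (c : A) (hk : ¬ IsId (g ≫ Groupoid.inv h0)) :
    ∑ i, (c * θ.act h0 (a i * e (Groupoid.inv h0))) * θ.act g (b i * e (Groupoid.inv g))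
      = 0 := by
  rw [compute hDe he_idem he_cent g h0 a b c, hGal2 _ hk, zero_mul,
    act_zero hDe he_idem, mul_zero]

lemma key_eq {y z : G} (g : y ⟶ z) {n : ℕ} (a b : Fin n → A)
    (hGal1 : ∀ w : G, ∑ i, a i * θ.act (𝟙 w) (b i * e (Groupoid.inv (𝟙 w))) = e (𝟙 w))
    (c : A) (hc : c ∈ θ.D g) :
    ∑ i, (c * θ.act g (a i * e (Groupoid.inv g))) * θ.act g (b i * e (Groupoid.inv g))
      = c := by
  have memD := fun {y z : G} (j : y ⟶ z) (x : A) => memD_iff (θ := θ) hDe he_idem j x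
  rw [compute hDe he_idem he_cent g g a b c, Groupoid.comp_inv, hGal1 y, he_idem g]
  set m : A := θ.act (Groupoid.inv g) (e g) with hmdef
  have hm : m ∈ θ.D (Groupoid.inv g) :=
    actinv_mem hDe he_idem g _ (e_memD hDe he_idem g)
  have hmy : m ∈ θ.D (𝟙 y) := D_sub hDe he_idem (Groupoid.inv g) hm
  have hq : e (Groupoid.inv g) * m ∈ θ.D (𝟙 y) := by
    rw [memD, mul_assoc, (memD _ _).1 hmy]
  rw [θ.act_id y _ hq]
  have h1 : e (Groupoid.inv g) * (e (Groupoid.inv g) * m) = m := by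
    rw [← mul_assoc, he_idem, he_cent, (memD _ _).1 hm]
  have h2 : e (𝟙 y) * m = m := by
    rw [he_cent, (memD _ _).1 hmy]
  rw [h1, h2, hmdef, act_invact hDe he_idem g _ (e_memD hDe he_idem g), (memD _ _).1 hc]

end

end Stmt16Aux

open Stmt16Aux

/-!
STATEMENT 16: θ a unital partial action of a finite groupoid 𝒢 on A = ⊕_y A_y with
A_g = A·1_g (here 1_g = e g) for central idempotents.  Γ' : A ⊗_{A^θ} A → A ⋆_θ 𝒢
sends a ⊗ b to Σ_g a θ_g(b 1_{g⁻¹}) δ_g, so an element r of A ⋆_θ 𝒢 lies in the image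
of Γ' iff there are a_i, b_i ∈ A with r(g) = Σ_i a_i θ_g(b_i 1_{g⁻¹}) for every g.
Then: A is a θ-partial Galois extension of A^θ (∃ a_i, b_i with
Σ_i a_i θ_g(b_i 1_{g⁻¹}) = δ_{y,g} 1_y for all objects y and morphisms g) provided Γ'
is surjective onto the elements 1_y δ_y; and conversely, if A is a θ-partial Galois
extension then Γ' is surjective.
-/
theorem extension_partial_actions_stmt16
    {G : Type v} [Groupoid G] {A : Type u} [NonUnitalRing A]
    [Fintype G] [∀ y z : G, Fintype (y ⟶ z)]
    [DecidableEq G] [∀ y z : G, DecidableEq (y ⟶ z)]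
    (θ : PartialAction G A)
    (e : ∀ {y z : G}, (y ⟶ z) → A)
    (he_idem : ∀ {y z : G} (g : y ⟶ z), e g * e g = e g)
    (he_cent : ∀ {y z : G} (g : y ⟶ z) (b : A), e g * b = b * e g)
    (hDe : ∀ {y z : G} (g : y ⟶ z), θ.D g = {a : A | ∃ b : A, a = b * e g})
    (horth : ∀ y z : G, y ≠ z → ∀ a ∈ θ.D (𝟙 y), ∀ b ∈ θ.D (𝟙 z), a * b = 0)
    (hspan : ∀ a : A, ∃ f : G → A, (∀ y : G, f y ∈ θ.D (𝟙 y)) ∧ a = ∑ y : G, f y) :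
    ((∀ y : G, ∃ (n : ℕ) (a b : Fin n → A), ∀ p : Mor G,
        (if p = (⟨y, y, 𝟙 y⟩ : Mor G) then e (𝟙 y) else 0)
          = ∑ i, a i * θ.act p.2.2 (b i * e (Groupoid.inv p.2.2))) →
      ∃ (n : ℕ) (a b : Fin n → A),
        (∀ y : G, ∑ i, a i * θ.act (𝟙 y) (b i * e (Groupoid.inv (𝟙 y))) = e (𝟙 y)) ∧
        (∀ {y z : G} (g : y ⟶ z), ¬ IsId g →
          ∑ i, a i * θ.act g (b i * e (Groupoid.inv g)) = 0)) ∧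
    ((∃ (n : ℕ) (a b : Fin n → A),
        (∀ y : G, ∑ i, a i * θ.act (𝟙 y) (b i * e (Groupoid.inv (𝟙 y))) = e (𝟙 y)) ∧
        (∀ {y z : G} (g : y ⟶ z), ¬ IsId g →
          ∑ i, a i * θ.act g (b i * e (Groupoid.inv g)) = 0)) →
      ∀ r ∈ skewSet θ, ∃ (n : ℕ) (a b : Fin n → A), ∀ p : Mor G,
        r p = ∑ i, a i * θ.act p.2.2 (b i * e (Groupoid.inv p.2.2))) := by
  constructor
  · -- Part 1
    intro H
    choose n a b hab using H
    let S := Σ y : G, Fin (n y)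
    let ε : Fin (Fintype.card S) ≃ S := (Fintype.equivFin S).symm
    refine ⟨Fintype.card S, fun i => a (ε i).1 (ε i).2, fun i => b (ε i).1 (ε i).2, ?_, ?_⟩
    · intro w
      have hre : ∀ {y' z' : G} (g : y' ⟶ z'),
          (∑ i : Fin (Fintype.card S),
            a (ε i).1 (ε i).2 * θ.act g (b (ε i).1 (ε i).2 * e (Groupoid.inv g)))
          = ∑ x : S, a x.1 x.2 * θ.act g (b x.1 x.2 * e (Groupoid.inv g)) :=
        fun g => Equiv.sum_comp ε (fun x : S => a x.1 x.2 * θ.act g (b x.1 x.2 * e (Groupoid.inv g)))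
      rw [hre, ← Finset.univ_sigma_univ, Finset.sum_sigma]
      have hterm : ∀ y : G,
          (∑ j : Fin (n y), a y j * θ.act (𝟙 w) (b y j * e (Groupoid.inv (𝟙 w))))
            = if (⟨w, w, 𝟙 w⟩ : Mor G) = ⟨y, y, 𝟙 y⟩ then e (𝟙 y) else 0 :=
        fun y => (hab y ⟨w, w, 𝟙 w⟩).symm
      calc (∑ y : G, ∑ j : Fin (n y), a y j * θ.act (𝟙 w) (b y j * e (Groupoid.inv (𝟙 w))))
          = ∑ y : G, if (⟨w, w, 𝟙 w⟩ : Mor G) = ⟨y, y, 𝟙 y⟩ then e (𝟙 y) else 0 :=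
            Finset.sum_congr rfl fun y _ => hterm y
        _ = e (𝟙 w) := by
            rw [Finset.sum_eq_single_of_mem w (Finset.mem_univ w)]
            · rw [if_pos rfl]
            · intro y _ hy
              rw [if_neg]
              intro hcontra
              exact hy (congrArg (fun p : Mor G => p.1) hcontra).symm
    · intro y0 z0 g hg
      have hre := Equiv.sum_comp ε
        (fun x : S => a x.1 x.2 * θ.act g (b x.1 x.2 * e (Groupoid.inv g)))
      rw [hre, ← Finset.univ_sigma_univ, Finset.sum_sigma]
      have hterm : ∀ y : G,
          (∑ j : Fin (n y), a y j * θ.act g (b y j * e (Groupoid.inv g)))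
            = if (⟨y0, z0, g⟩ : Mor G) = ⟨y, y, 𝟙 y⟩ then e (𝟙 y) else 0 :=
        fun y => (hab y ⟨y0, z0, g⟩).symm
      calc (∑ y : G, ∑ j : Fin (n y), a y j * θ.act g (b y j * e (Groupoid.inv g)))
          = ∑ y : G, if (⟨y0, z0, g⟩ : Mor G) = ⟨y, y, 𝟙 y⟩ then e (𝟙 y) else 0 :=
            Finset.sum_congr rfl fun y _ => hterm y
        _ = 0 := by
            refine Finset.sum_eq_zero fun y _ => ?_
            rw [if_neg]
            intro hcontra
            apply hg
            have h1 : y0 = y := congrArg (fun p : Mor G => p.1) hcontra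
            subst h1
            have h2 : z0 = y0 := congrArg (fun p : Mor G => p.2.1) hcontra
            subst h2
            injection hcontra with ha hb
            injection hb with hc hd
            exact ⟨rfl, by rw [hd, eqToHom_refl]⟩
  · -- Part 2
    rintro ⟨n, a, b, h1, h2⟩ r hr
    classical
    let ε : Fin (Fintype.card (Mor G × Fin n)) ≃ Mor G × Fin n :=
      (Fintype.equivFin (Mor G × Fin n)).symm
    refine ⟨Fintype.card (Mor G × Fin n),
      fun i => r (ε i).1 * θ.act (ε i).1.2.2 (a (ε i).2 * e (Groupoid.inv (ε i).1.2.2)),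
      fun i => b (ε i).2, ?_⟩
    rintro ⟨y, z, g⟩
    have hre := Equiv.sum_comp ε (fun x : Mor G × Fin n =>
      (r x.1 * θ.act x.1.2.2 (a x.2 * e (Groupoid.inv x.1.2.2))) *
        θ.act g (b x.2 * e (Groupoid.inv g)))
    show r ⟨y, z, g⟩ = _
    rw [hre, Fintype.sum_prod_type]
    rw [Finset.sum_eq_single_of_mem (⟨y, z, g⟩ : Mor G) (Finset.mem_univ _)]
    · exact (key_eq hDe he_idem he_cent g a b h1 (r ⟨y, z, g⟩) (hr ⟨y, z, g⟩)).symm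
    · rintro ⟨y', z', h0⟩ _ hne
      by_cases hz : z' = z
      · subst hz
        refine key_ne hDe he_idem he_cent g h0 a b (fun j hj => h2 j hj) (r ⟨y', z', h0⟩) ?_
        rintro ⟨hy, hk⟩
        subst hy
        rw [eqToHom_refl] at hk
        have hgh : g = h0 := by
          have h3 := congrArg (fun t => t ≫ h0) hk
          simpa using h3
        subst hgh
        exact hne rfl
      · refine Finset.sum_eq_zero fun j _ => ?_
        have hu : θ.act h0 (a j * e (Groupoid.inv h0)) ∈ θ.D h0 :=
          θ.act_mem h0 _ (by rw [memD_iff hDe he_idem, mul_assoc, he_idem])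
        have hcu : r ⟨y', z', h0⟩ * θ.act h0 (a j * e (Groupoid.inv h0)) ∈ θ.D (𝟙 z') :=
          D_sub hDe he_idem h0 (by
            rw [memD_iff hDe he_idem, mul_assoc, (memD_iff hDe he_idem h0 _).1 hu])
        have hv : θ.act g (b j * e (Groupoid.inv g)) ∈ θ.D (𝟙 z) :=
          D_sub hDe he_idem g (θ.act_mem g _ (by
            rw [memD_iff hDe he_idem, mul_assoc, he_idem]))
        exact horth z' z hz _ hcu _ hv
end

section
/- Under the standing hypotheses (𝒢 connected finite groupoid, θ = Ext(γ) unital, A = ⊕_{y∈𝒢₀} B_y, A a left A^θ-module, B_x a left B_x^{θ_{(x)}}-module), the following are equivalent: (i) A is a θ-partial Galois extension of A^θ and the trace map t_θ : A → A^θ is surjective; (ii) the Morita context (A^θ, A⋆_θ𝒢, A, A, Γ, Γ') is strict; (iii) the Morita context (B_x^{θ_{(x)}}, B_x ⋆_{θ_{(x)}} 𝒢(x), B_x, B_x, Γ_x, Γ'_x) is strict; (iv) B_x is a partial Galois extension of B_x^{θ_{(x)}} and t_{θ_{(x)}} is surjective. -/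
open CategoryTheory

universe u v

section Defs

variable {G : Type v} [Groupoid G] {A : Type u} [NonUnitalRing A]
  [Fintype G] [∀ y z : G, Fintype (y ⟶ z)]
  (θ : PartialAction G A) (e : ∀ {y z : G}, (y ⟶ z) → A) (x : G)

/-- The trace map `t_θ(a) = Σ_{g∈𝒢} θ_g(a·1_{g⁻¹})`. -/
def traceA (c : A) : A :=
  ∑ y : G, ∑ w : G, ∑ g : y ⟶ w, θ.act g (c * e (Groupoid.inv g))

/-- The trace map of the partial action of the isotropy group `𝒢(x)` on `B_x`. -/
def traceX (c : A) : A := ∑ h : x ⟶ x, θ.act h (c * e (Groupoid.inv h))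

/-- The subring of invariants `A^θ`. -/
def invA : Set A :=
  {a | ∀ {y z : G} (g : y ⟶ z), θ.act g (a * e (Groupoid.inv g)) = a * e g}

/-- The invariants `B_x^{θ_{(x)}}` of the isotropy partial action. -/
def invX : Set A := {a | ∀ h : x ⟶ x, θ.act h (a * e (Groupoid.inv h)) = a * e h}

/-- `A` is a `θ`-partial Galois extension of `A^θ`: there are Galois coordinates
`a_i, b_i` with `Σ_i a_i θ_g(b_i 1_{g⁻¹}) = δ_{y,g} 1_y` for all objects `y` and
morphisms `g`. -/
def GaloisA : Prop :=
  ∃ (n : ℕ) (a b : Fin n → A),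
    (∀ y : G, ∑ i, a i * θ.act (𝟙 y) (b i * e (Groupoid.inv (𝟙 y))) = e (𝟙 y)) ∧
    (∀ {y z : G} (g : y ⟶ z), ¬ IsId g →
      ∑ i, a i * θ.act g (b i * e (Groupoid.inv g)) = 0)

/-- `B_x` is a partial Galois extension of `B_x^{θ_{(x)}}`. -/
def GaloisX : Prop :=
  ∃ (n : ℕ) (a b : Fin n → A),
    (∀ i, a i ∈ θ.D (𝟙 x) ∧ b i ∈ θ.D (𝟙 x)) ∧
    (∑ i, a i * θ.act (𝟙 x) (b i * e (Groupoid.inv (𝟙 x))) = e (𝟙 x)) ∧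
    (∀ h : x ⟶ x, h ≠ 𝟙 x → ∑ i, a i * θ.act h (b i * e (Groupoid.inv h)) = 0)

/-- Strictness of the Morita context `(A^θ, A⋆_θ𝒢, A, A, Γ, Γ')`, expressed (as the
rings involved are unital) by the surjectivity of both connecting maps `Γ` and `Γ'`. -/
def StrictA : Prop :=
  (∀ a ∈ invA θ e, ∃ (n : ℕ) (u v : Fin n → A),
      a = ∑ i, traceA θ e (u i * v i)) ∧
  (∀ r ∈ skewSet θ, ∃ (n : ℕ) (a b : Fin n → A), ∀ p : Mor G,
      r p = ∑ i, a i * θ.act p.2.2 (b i * e (Groupoid.inv p.2.2)))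

/-- Strictness of the Morita context
`(B_x^{θ_{(x)}}, B_x ⋆_{θ_{(x)}} 𝒢(x), B_x, B_x, Γ_x, Γ'_x)`. -/
def StrictX : Prop :=
  (∀ a ∈ θ.D (𝟙 x), a ∈ invX θ e x → ∃ (n : ℕ) (u v : Fin n → A),
      (∀ i, u i ∈ θ.D (𝟙 x) ∧ v i ∈ θ.D (𝟙 x)) ∧
      a = ∑ i, traceX θ e x (u i * v i)) ∧
  (∀ s : (x ⟶ x) → A, (∀ h : x ⟶ x, s h ∈ θ.D h) →
    ∃ (n : ℕ) (a b : Fin n → A),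
      (∀ i, a i ∈ θ.D (𝟙 x) ∧ b i ∈ θ.D (𝟙 x)) ∧
      ∀ h : x ⟶ x, s h = ∑ i, a i * θ.act h (b i * e (Groupoid.inv h)))

end Defs

/-!
Write `β_g(c) = θ_g(c 1_{g⁻¹})` (`PartialAction.totalAct`). Unitality makes `β_g` additive and
multiplicative with `β_g(1_l) = 1_g 1_{gl}`, and everything rests on the composition rule
`β_g(β_h c) = β_{gh}(c) 1_g`. It makes traces invariant, and it shows that Galois coordinates
multiply as `Σ_i β_g(a_i) β_h(b_i) = δ_{g,h} 1_g`; hence `Σ_{g,i} r_g β_g(a_i) ⊗ b_i` is a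
`Γ'`-preimage of any `r` in the skew groupoid ring, while a `Γ'`-preimage of the identity is a
system of Galois coordinates. `Γ` is onto iff the trace is, because `Σ_y 1_y` is a unit of `A`.

Between `A` and `B_x`, multiplication by `1_x` restricts invariants and Galois coordinates, and the
group-type isomorphisms `θ_{τ_y} : B_x → B_y` globalize them: they turn `g : y → z` into
`τ_z⁻¹ g τ_y ∈ 𝒢(x)`. Conversely `t_θ(c) 1_x` is the isotropy trace of the element obtained by
moving all blocks of `c` into `B_x`.
-/

namespace CategoryTheory.Groupoid

variable {G : Type v} [Groupoid G]

lemma inv_inv {y z : G} (g : y ⟶ z) : Groupoid.inv (Groupoid.inv g) = g := by simp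

lemma inv_id (y : G) : Groupoid.inv (𝟙 y) = 𝟙 y := by simp

end CategoryTheory.Groupoid

lemma isId_id {G : Type v} [Groupoid G] (y : G) : IsId (𝟙 y) := ⟨rfl, rfl⟩

lemma isId_iff_eq_id {G : Type v} [Groupoid G] {y : G} (g : y ⟶ y) : IsId g ↔ g = 𝟙 y :=
  ⟨fun ⟨_, h⟩ => h, fun h => ⟨rfl, h⟩⟩

lemma exists_fin_pairs {A : Type u} [AddCommMonoid A] {ι : Type*} [Fintype ι] (a b : ι → A) :
    ∃ (n : ℕ) (a' b' : Fin n → A), (∀ j, ∃ i, a' j = a i ∧ b' j = b i) ∧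
      ∀ F : A → A → A, ∑ j, F (a' j) (b' j) = ∑ i, F (a i) (b i) :=
  let σ := (Fintype.equivFin ι).symm
  ⟨_, a ∘ σ, b ∘ σ, fun j => ⟨σ j, rfl, rfl⟩, fun F => Equiv.sum_comp σ fun i => F (a i) (b i)⟩

namespace PartialAction

variable {G : Type v} [Groupoid G] {A : Type u} [NonUnitalRing A]

section Basic

variable (θ : PartialAction G A)

lemma D_subset_D_id {y z : G} (g : y ⟶ z) : θ.D g ⊆ θ.D (𝟙 z) := (θ.ideal_dom g).1

lemma act_zero {y z : G} (g : y ⟶ z) : θ.act g 0 = 0 := by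
  have h0 : (0 : A) ∈ θ.D (Groupoid.inv g) := (θ.ideal_dom _).2.1
  simpa using θ.act_add g 0 h0 0 h0

lemma act_mem_D_comp {w y z : G} (g : y ⟶ z) (h : w ⟶ y) {a : A}
    (hg : a ∈ θ.D (Groupoid.inv g)) (hh : a ∈ θ.D h) : θ.act g a ∈ θ.D (h ≫ g) := by
  obtain ⟨b, hb, rfl⟩ := θ.act_surj h a hh
  have hcond : θ.act h b ∈ θ.D (Groupoid.inv g) ∩ θ.D h := ⟨hg, hh⟩
  rw [θ.act_comp g h b hb hcond]
  exact θ.act_mem _ b (θ.mem_comp g h b hb hcond)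

lemma act_act {w y z : G} (g : y ⟶ z) (h : z ⟶ w) {a : A}
    (hg : a ∈ θ.D (Groupoid.inv g)) (hgh : a ∈ θ.D (Groupoid.inv (g ≫ h))) :
    θ.act h (θ.act g a) = θ.act (g ≫ h) a := by
  refine θ.act_comp h g a hg ⟨?_, θ.act_mem g a hg⟩
  simpa using θ.act_mem_D_comp g _ hg hgh

lemma act_inv_act {y z : G} (g : y ⟶ z) {a : A} (ha : a ∈ θ.D (Groupoid.inv g)) :
    θ.act (Groupoid.inv g) (θ.act g a) = a := by
  have hmem : θ.act g a ∈ θ.D (Groupoid.inv (Groupoid.inv g)) := by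
    rw [Groupoid.inv_inv]; exact θ.act_mem g a ha
  rw [θ.act_comp _ g a ha ⟨hmem, θ.act_mem g a ha⟩, Groupoid.comp_inv]
  exact θ.act_id y a (θ.D_subset_D_id _ ha)

lemma act_act_inv {y z : G} (g : y ⟶ z) {a : A} (ha : a ∈ θ.D g) :
    θ.act g (θ.act (Groupoid.inv g) a) = a := by
  simpa using θ.act_inv_act (Groupoid.inv g) (a := a) (by rwa [Groupoid.inv_inv])

lemma act_inv_mem {y z : G} (g : y ⟶ z) {a : A} (ha : a ∈ θ.D g) :
    θ.act (Groupoid.inv g) a ∈ θ.D (Groupoid.inv g) :=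
  θ.act_mem _ a (by rwa [Groupoid.inv_inv])

def totalAct (e : ∀ {y z : G}, (y ⟶ z) → A) {y z : G} (g : y ⟶ z) (c : A) : A :=
  θ.act g (c * e (Groupoid.inv g))

lemma totalAct_zero (e : ∀ {y z : G}, (y ⟶ z) → A) {y z : G} (g : y ⟶ z) :
    θ.totalAct e g 0 = 0 := by
  rw [totalAct, zero_mul, act_zero]

structure IsUnital (e : ∀ {y z : G}, (y ⟶ z) → A) : Prop where
  mul_self : ∀ {y z : G} (g : y ⟶ z), e g * e g = e g
  comm : ∀ {y z : G} (g : y ⟶ z) (b : A), e g * b = b * e g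
  D_eq : ∀ {y z : G} (g : y ⟶ z), θ.D g = {a : A | ∃ b : A, a = b * e g}

/-- `A` is the internal direct sum of the ideals `B_y = D (𝟙 y)`. -/
structure IsDirectSum [Fintype G] : Prop where
  mul_eq_zero : ∀ y z : G, y ≠ z → ∀ a ∈ θ.D (𝟙 y), ∀ b ∈ θ.D (𝟙 z), a * b = 0
  exists_sum : ∀ a : A, ∃ f : G → A, (∀ y : G, f y ∈ θ.D (𝟙 y)) ∧ a = ∑ y : G, f y

/-- `θ_g` is an isomorphism of the whole blocks `B_y ≅ B_z` (a morphism of group type). -/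
structure IsFull {y z : G} (g : y ⟶ z) : Prop where
  D_eq : θ.D g = θ.D (𝟙 z)
  D_inv_eq : θ.D (Groupoid.inv g) = θ.D (𝟙 y)

def globalize [Fintype G] (e : ∀ {y z : G}, (y ⟶ z) → A) {x : G} (τ : ∀ y : G, x ⟶ y) (a : A) :
    A :=
  ∑ y, θ.totalAct e (τ y) a

def localize [Fintype G] (e : ∀ {y z : G}, (y ⟶ z) → A) {x : G} (τ : ∀ y : G, x ⟶ y) (c : A) :
    A :=
  ∑ y, θ.totalAct e (Groupoid.inv (τ y)) c

end Basic

variable {θ : PartialAction G A} {e : ∀ {y z : G}, (y ⟶ z) → A}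

lemma IsDirectSum.mul_eq_zero_of_ne [Fintype G] (hd : θ.IsDirectSum) {y z y' z' : G}
    {g : y ⟶ z} {h : y' ⟶ z'} (hz : z ≠ z') {a b : A} (ha : a ∈ θ.D g) (hb : b ∈ θ.D h) :
    a * b = 0 :=
  hd.mul_eq_zero z z' hz a (θ.D_subset_D_id g ha) b (θ.D_subset_D_id h hb)

lemma IsFull.inv {y z : G} {v : y ⟶ z} (hv : θ.IsFull v) : θ.IsFull (Groupoid.inv v) :=
  ⟨hv.D_inv_eq, by rw [Groupoid.inv_inv, hv.D_eq]⟩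

lemma IsFull.D_comp {p q r : G} {v : p ⟶ q} (hv : θ.IsFull v) (h : q ⟶ r) :
    θ.D (v ≫ h) = θ.D h := by
  ext a
  constructor
  · intro ha
    obtain ⟨b, hb, rfl⟩ := θ.act_surj _ a ha
    have hbv : b ∈ θ.D (Groupoid.inv v) := by
      rw [hv.D_inv_eq]; exact θ.D_subset_D_id _ hb
    rw [← θ.act_act v h hbv hb]
    exact θ.act_mem h _ (by simpa using θ.act_mem_D_comp v _ hbv hb)
  · intro ha
    obtain ⟨c, hc, rfl⟩ := θ.act_surj h a ha
    exact θ.act_mem_D_comp h v hc (by rw [hv.D_eq]; exact θ.D_subset_D_id _ hc)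

lemma traceA_eq [Fintype G] [∀ y z : G, Fintype (y ⟶ z)] (c : A) :
    traceA θ e c = ∑ y, ∑ w, ∑ g : y ⟶ w, θ.totalAct e g c := rfl

lemma traceX_eq [∀ y z : G, Fintype (y ⟶ z)] (x : G) (c : A) :
    traceX θ e x c = ∑ h : x ⟶ x, θ.totalAct e h c := rfl

lemma mem_invA_iff {a : A} :
    a ∈ invA θ e ↔ ∀ {y z : G} (g : y ⟶ z), θ.totalAct e g a = a * e g := Iff.rfl

lemma mem_invX_iff {x : G} {a : A} :
    a ∈ invX θ e x ↔ ∀ h : x ⟶ x, θ.totalAct e h a = a * e h := Iff.rfl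

namespace IsUnital

lemma mem_D_iff (hθ : θ.IsUnital e) {y z : G} {g : y ⟶ z} {a : A} :
    a ∈ θ.D g ↔ a * e g = a := by
  rw [hθ.D_eq g]
  constructor
  · rintro ⟨b, rfl⟩
    rw [mul_assoc, hθ.mul_self]
  · intro h
    exact ⟨a, h.symm⟩

lemma mul_e_of_mem (hθ : θ.IsUnital e) {y z : G} {g : y ⟶ z} {a : A} (ha : a ∈ θ.D g) :
    a * e g = a :=
  hθ.mem_D_iff.1 ha

lemma e_mul_of_mem (hθ : θ.IsUnital e) {y z : G} {g : y ⟶ z} {a : A} (ha : a ∈ θ.D g) :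
    e g * a = a := by
  rw [hθ.comm, hθ.mul_e_of_mem ha]

lemma mul_e_mem (hθ : θ.IsUnital e) {y z : G} (g : y ⟶ z) (b : A) : b * e g ∈ θ.D g :=
  hθ.mem_D_iff.2 (by rw [mul_assoc, hθ.mul_self])

lemma e_mem (hθ : θ.IsUnital e) {y z : G} (g : y ⟶ z) : e g ∈ θ.D g :=
  hθ.mem_D_iff.2 (hθ.mul_self g)

lemma zero_mem (hθ : θ.IsUnital e) {y z : G} (g : y ⟶ z) : (0 : A) ∈ θ.D g :=
  hθ.mem_D_iff.2 (zero_mul _)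

lemma mul_mem_left (hθ : θ.IsUnital e) {y z : G} {g : y ⟶ z} {a : A} (ha : a ∈ θ.D g)
    (b : A) : b * a ∈ θ.D g :=
  hθ.mem_D_iff.2 (by rw [mul_assoc, hθ.mul_e_of_mem ha])

lemma mul_mem_right (hθ : θ.IsUnital e) {y z : G} {g : y ⟶ z} {a : A} (ha : a ∈ θ.D g)
    (b : A) : a * b ∈ θ.D g :=
  hθ.mem_D_iff.2 (by rw [mul_assoc, ← hθ.comm, ← mul_assoc, hθ.mul_e_of_mem ha])

lemma sum_mem (hθ : θ.IsUnital e) {y z : G} {g : y ⟶ z} {ι : Type*} {s : Finset ι}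
    {f : ι → A} (h : ∀ i ∈ s, f i ∈ θ.D g) : ∑ i ∈ s, f i ∈ θ.D g :=
  hθ.mem_D_iff.2 <| by
    rw [Finset.sum_mul]
    exact Finset.sum_congr rfl fun i hi => hθ.mul_e_of_mem (h i hi)

lemma e_eq_of_D_eq (hθ : θ.IsUnital e) {y z y' z' : G} {g : y ⟶ z} {g' : y' ⟶ z'}
    (hD : θ.D g = θ.D g') : e g = e g' := by
  have h₁ : e g ∈ θ.D g' := hD ▸ hθ.e_mem g
  have h₂ : e g' ∈ θ.D g := hD ▸ hθ.e_mem g'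
  rw [← hθ.mul_e_of_mem h₁, hθ.comm, hθ.mul_e_of_mem h₂]

lemma e_eq_of_isFull (hθ : θ.IsUnital e) {y z : G} {v : y ⟶ z} (hv : θ.IsFull v) :
    e v = e (𝟙 z) :=
  hθ.e_eq_of_D_eq hv.D_eq

lemma e_comp_of_isFull (hθ : θ.IsUnital e) {p q r : G} {v : p ⟶ q} (hv : θ.IsFull v)
    (h : q ⟶ r) : e (v ≫ h) = e h :=
  hθ.e_eq_of_D_eq (hv.D_comp h)

lemma sum_mul_e_id [Fintype G] (hθ : θ.IsUnital e) (hd : θ.IsDirectSum) (a : A) :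
    ∑ y, a * e (𝟙 y) = a := by
  obtain ⟨f, hf, rfl⟩ := hd.exists_sum a
  calc ∑ y, (∑ w, f w) * e (𝟙 y) = ∑ y, f y * e (𝟙 y) :=
        Finset.sum_congr rfl fun y _ => by
          rw [Finset.sum_mul, Fintype.sum_eq_single y fun w hw =>
            hd.mul_eq_zero_of_ne hw (hf w) (hθ.e_mem _)]
    _ = ∑ y, f y := Finset.sum_congr rfl fun y _ => hθ.mul_e_of_mem (hf y)

lemma totalAct_mem (hθ : θ.IsUnital e) {y z : G} (g : y ⟶ z) (c : A) :
    θ.totalAct e g c ∈ θ.D g :=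
  θ.act_mem g _ (hθ.mul_e_mem _ c)

lemma totalAct_add (hθ : θ.IsUnital e) {y z : G} (g : y ⟶ z) (c d : A) :
    θ.totalAct e g (c + d) = θ.totalAct e g c + θ.totalAct e g d := by
  rw [totalAct, add_mul]
  exact θ.act_add g _ (hθ.mul_e_mem _ c) _ (hθ.mul_e_mem _ d)

lemma totalAct_sum (hθ : θ.IsUnital e) {y z : G} (g : y ⟶ z) {ι : Type*} (s : Finset ι)
    (f : ι → A) : θ.totalAct e g (∑ i ∈ s, f i) = ∑ i ∈ s, θ.totalAct e g (f i) :=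
  map_sum (AddMonoidHom.mk' (θ.totalAct e g) (hθ.totalAct_add g)) f s

lemma totalAct_mul (hθ : θ.IsUnital e) {y z : G} (g : y ⟶ z) (a b : A) :
    θ.totalAct e g (a * b) = θ.totalAct e g a * θ.totalAct e g b := by
  have hab : a * e (Groupoid.inv g) * (b * e (Groupoid.inv g)) = a * b * e (Groupoid.inv g) := by
    rw [mul_assoc a, ← mul_assoc (e _) b, hθ.comm _ b, mul_assoc b, hθ.mul_self, ← mul_assoc]
  rw [totalAct, ← hab, θ.act_mul g _ (hθ.mul_e_mem _ a) _ (hθ.mul_e_mem _ b)]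
  rfl

lemma totalAct_id (hθ : θ.IsUnital e) (y : G) (c : A) : θ.totalAct e (𝟙 y) c = c * e (𝟙 y) := by
  rw [totalAct, Groupoid.inv_id, θ.act_id y _ (hθ.mul_e_mem _ c)]

lemma totalAct_mul_e_of_mem (hθ : θ.IsUnital e) {y z p q : G} (g : y ⟶ z) {l : p ⟶ q}
    (hl : e (Groupoid.inv g) ∈ θ.D l) (c : A) :
    θ.totalAct e g (c * e l) = θ.totalAct e g c := by
  rw [totalAct, totalAct, mul_assoc, ← hθ.comm, hθ.mul_e_of_mem hl]

lemma totalAct_mul_right (hθ : θ.IsUnital e) {y z : G} (g : y ⟶ z) (a c : A) :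
    θ.totalAct e g a * c = θ.totalAct e g (a * θ.totalAct e (Groupoid.inv g) c) := by
  set s := θ.act (Groupoid.inv g) (c * e g)
  have hs : θ.totalAct e (Groupoid.inv g) c = s := by rw [totalAct, Groupoid.inv_inv]
  have hsD : s ∈ θ.D (Groupoid.inv g) := θ.act_inv_mem g (hθ.mul_e_mem g c)
  have hac : a * s * e (Groupoid.inv g) = a * e (Groupoid.inv g) * s := by
    rw [mul_assoc, hθ.mul_e_of_mem hsD, mul_assoc, hθ.e_mul_of_mem hsD]
  calc θ.totalAct e g a * c = θ.totalAct e g a * (c * e g) := by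
        rw [← hθ.comm g c, ← mul_assoc, hθ.mul_e_of_mem (hθ.totalAct_mem g a)]
    _ = θ.act g (a * e (Groupoid.inv g)) * θ.act g s := by
        rw [show θ.act g s = c * e g from θ.act_act_inv g (hθ.mul_e_mem g c)]; rfl
    _ = θ.act g (a * e (Groupoid.inv g) * s) := (θ.act_mul g _ (hθ.mul_e_mem _ a) s hsD).symm
    _ = θ.totalAct e g (a * θ.totalAct e (Groupoid.inv g) c) := by rw [hs, totalAct, hac]

lemma totalAct_e (hθ : θ.IsUnital e) {p q r : G} (g : q ⟶ p) (l : r ⟶ q) :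
    θ.totalAct e g (e l) = e g * e (l ≫ g) := by
  set w := e l * e (Groupoid.inv g)
  set v := e g * e (l ≫ g)
  have hwg : w ∈ θ.D (Groupoid.inv g) := hθ.mul_e_mem _ _
  have hwl : w ∈ θ.D l := hθ.mul_mem_right (hθ.e_mem l) _
  have hvg : v ∈ θ.D g := hθ.mul_mem_right (hθ.e_mem g) _
  have hvl : v ∈ θ.D (l ≫ g) := hθ.mul_e_mem _ _
  set σ := θ.act (Groupoid.inv g) v
  have hσg : σ ∈ θ.D (Groupoid.inv g) := θ.act_inv_mem g hvg
  have hσl : σ ∈ θ.D l := by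
    have h := θ.act_mem_D_comp (Groupoid.inv g) (l ≫ g) (a := v) (by rwa [Groupoid.inv_inv]) hvl
    rwa [Category.assoc, Groupoid.comp_inv, Category.comp_id] at h
  have hwσ : w * σ = σ := by
    rw [mul_assoc, hθ.e_mul_of_mem hσg, hθ.e_mul_of_mem hσl]
  have hm : θ.act g w * v = θ.act g w := by
    rw [← mul_assoc, hθ.mul_e_of_mem (θ.act_mem g w hwg),
      hθ.mul_e_of_mem (θ.act_mem_D_comp g l hwg hwl)]
  calc θ.totalAct e g (e l) = θ.act g w := rfl
    _ = θ.act g w * v := hm.symm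
    _ = θ.act g (w * σ) := by rw [θ.act_mul g w hwg σ hσg, θ.act_act_inv g hvg]
    _ = v := by rw [hwσ, θ.act_act_inv g hvg]

lemma totalAct_e_id (hθ : θ.IsUnital e) {y z : G} (g : y ⟶ z) :
    θ.totalAct e g (e (𝟙 y)) = e g := by
  rw [hθ.totalAct_e, Category.id_comp, hθ.mul_self]

lemma totalAct_mul_e (hθ : θ.IsUnital e) {y z r : G} (g : y ⟶ z) (l : r ⟶ z) (c : A) :
    θ.totalAct e g c * e l = θ.totalAct e g (c * e (l ≫ Groupoid.inv g)) := by
  rw [hθ.totalAct_mul_right, hθ.totalAct_e, ← mul_assoc, mul_assoc c, hθ.comm (Groupoid.inv g),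
    ← mul_assoc, hθ.totalAct_mul_e_of_mem g (hθ.e_mem _)]

lemma totalAct_totalAct (hθ : θ.IsUnital e) {w y z : G} (h : w ⟶ y) (g : y ⟶ z) (c : A) :
    θ.totalAct e g (θ.totalAct e h c) = θ.totalAct e (h ≫ g) c * e g := by
  have hinv : Groupoid.inv g ≫ Groupoid.inv h = Groupoid.inv (h ≫ g) := by simp
  have hinv' : g ≫ Groupoid.inv (h ≫ g) = Groupoid.inv h := by simp
  set W := c * e (Groupoid.inv (h ≫ g)) * e (Groupoid.inv h)
  have hW₁ : W ∈ θ.D (Groupoid.inv h) := hθ.mul_e_mem _ _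
  have hW₂ : W ∈ θ.D (Groupoid.inv (h ≫ g)) := hθ.mul_mem_right (hθ.mul_e_mem _ _) _
  calc θ.totalAct e g (θ.totalAct e h c) = θ.act g (θ.act h W) := by
        rw [totalAct, hθ.totalAct_mul_e, hinv]; rfl
    _ = θ.act (h ≫ g) W := θ.act_act h g hW₁ hW₂
    _ = θ.totalAct e (h ≫ g) c * e g := by
        rw [hθ.totalAct_mul_e, hinv', totalAct, mul_assoc, hθ.comm (Groupoid.inv h), ← mul_assoc]

lemma totalAct_totalAct_of_comp_eq (hθ : θ.IsUnital e) {x x' y z : G} {v : x ⟶ y}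
    {v' : x' ⟶ z} (hv : θ.IsFull v) (hv' : θ.IsFull v') {g : y ⟶ z} {h : x ⟶ x'}
    (hsq : h ≫ v' = v ≫ g) (b : A) :
    θ.totalAct e g (θ.totalAct e v b) = θ.totalAct e v' (θ.totalAct e h b) := by
  have hmem : θ.totalAct e (v ≫ g) b ∈ θ.D g := hv.D_comp g ▸ hθ.totalAct_mem _ b
  rw [hθ.totalAct_totalAct, hθ.totalAct_totalAct, hsq, hθ.mul_e_of_mem hmem,
    hθ.e_eq_of_isFull hv', hθ.mul_e_of_mem (θ.D_subset_D_id g hmem)]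

lemma totalAct_eq_zero_of_ne [Fintype G] (hθ : θ.IsUnital e) (hd : θ.IsDirectSum)
    {y z w w' : G} (g : y ⟶ z) {k : w ⟶ w'} (hw : w' ≠ y) {c : A} (hc : c ∈ θ.D k) :
    θ.totalAct e g c = 0 := by
  rw [totalAct, hd.mul_eq_zero_of_ne hw hc (hθ.e_mem _), act_zero]

lemma sum_totalAct_mul_totalAct (hθ : θ.IsUnital e) {ι : Type*} [Fintype ι] {y y' z : G}
    (g : y ⟶ z) (h : y' ⟶ z) (a b : ι → A) :
    ∑ i, θ.totalAct e g (a i) * θ.totalAct e h (b i) =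
      θ.totalAct e g (∑ i, a i * θ.totalAct e (h ≫ Groupoid.inv g) (b i)) := by
  rw [hθ.totalAct_sum]
  refine Finset.sum_congr rfl fun i _ => ?_
  rw [hθ.totalAct_mul_right, hθ.totalAct_totalAct, ← mul_assoc,
    hθ.totalAct_mul_e_of_mem g (hθ.e_mem _)]

lemma sum_totalAct_mul_totalAct_self (hθ : θ.IsUnital e) {ι : Type*} [Fintype ι] {y z : G}
    {a b : ι → A} (hid : ∑ i, a i * θ.totalAct e (𝟙 y) (b i) = e (𝟙 y)) (g : y ⟶ z) :
    ∑ i, θ.totalAct e g (a i) * θ.totalAct e g (b i) = e g := by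
  rw [hθ.sum_totalAct_mul_totalAct, Groupoid.comp_inv, hid, hθ.totalAct_e_id]

lemma sum_totalAct_mul_totalAct_eq_zero (hθ : θ.IsUnital e) {ι : Type*} [Fintype ι]
    {y y' z : G} {a b : ι → A} (g : y ⟶ z) (h : y' ⟶ z)
    (h0 : ∑ i, a i * θ.totalAct e (h ≫ Groupoid.inv g) (b i) = 0) :
    ∑ i, θ.totalAct e g (a i) * θ.totalAct e h (b i) = 0 := by
  rw [hθ.sum_totalAct_mul_totalAct, h0, totalAct_zero]

section Traces


lemma traceA_add [Fintype G] [∀ y z : G, Fintype (y ⟶ z)] (hθ : θ.IsUnital e) (c d : A) :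
    traceA θ e (c + d) = traceA θ e c + traceA θ e d := by
  simp only [traceA_eq, hθ.totalAct_add, Finset.sum_add_distrib]

lemma traceA_sum [Fintype G] [∀ y z : G, Fintype (y ⟶ z)] (hθ : θ.IsUnital e) {ι : Type*}
    (s : Finset ι) (f : ι → A) :
    traceA θ e (∑ i ∈ s, f i) = ∑ i ∈ s, traceA θ e (f i) :=
  map_sum (AddMonoidHom.mk' (traceA θ e) hθ.traceA_add) f s

lemma traceX_add [∀ y z : G, Fintype (y ⟶ z)] (hθ : θ.IsUnital e) (x : G) (c d : A) :
    traceX θ e x (c + d) = traceX θ e x c + traceX θ e x d := by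
  simp only [traceX_eq, hθ.totalAct_add, Finset.sum_add_distrib]

lemma traceX_sum [∀ y z : G, Fintype (y ⟶ z)] (hθ : θ.IsUnital e) (x : G) {ι : Type*}
    (s : Finset ι) (f : ι → A) :
    traceX θ e x (∑ i ∈ s, f i) = ∑ i ∈ s, traceX θ e x (f i) :=
  map_sum (AddMonoidHom.mk' (traceX θ e x) (hθ.traceX_add x)) f s

lemma traceA_mul_e [Fintype G] [∀ y z : G, Fintype (y ⟶ z)] (hθ : θ.IsUnital e)
    (hd : θ.IsDirectSum) {y z : G} (g : y ⟶ z) (c : A) :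
    traceA θ e c * e g = ∑ w, ∑ h : w ⟶ z, θ.totalAct e h c * e g := by
  rw [traceA_eq, Finset.sum_mul]
  refine Finset.sum_congr rfl fun w _ => ?_
  rw [Finset.sum_mul, Fintype.sum_eq_single z fun w' hw' => by
      rw [Finset.sum_mul]
      exact Finset.sum_eq_zero fun h _ =>
        hd.mul_eq_zero_of_ne hw' (hθ.totalAct_mem h c) (hθ.e_mem g),
    Finset.sum_mul]

lemma traceA_mem_invA [Fintype G] [∀ y z : G, Fintype (y ⟶ z)] (hθ : θ.IsUnital e)
    (hd : θ.IsDirectSum) (c : A) :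
    traceA θ e c ∈ invA θ e := by
  refine mem_invA_iff.2 fun {y z} g => ?_
  calc θ.totalAct e g (traceA θ e c)
        = ∑ w, ∑ w', ∑ h : w ⟶ w', θ.totalAct e g (θ.totalAct e h c) := by
        simp only [traceA_eq, hθ.totalAct_sum]
    _ = ∑ w, ∑ h : w ⟶ y, θ.totalAct e g (θ.totalAct e h c) :=
        Finset.sum_congr rfl fun w _ => Fintype.sum_eq_single y fun w' hw' =>
          Finset.sum_eq_zero fun h _ => hθ.totalAct_eq_zero_of_ne hd g hw' (hθ.totalAct_mem h c)
    _ = ∑ w, ∑ h : w ⟶ z, θ.totalAct e h c * e g := by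
        simp only [hθ.totalAct_totalAct]
        exact Finset.sum_congr rfl fun w _ =>
          Fintype.sum_equiv ((Groupoid.isoEquivHom y z).symm g).homToEquiv _ _ fun _ => rfl
    _ = traceA θ e c * e g := (hθ.traceA_mul_e hd g c).symm

variable {x : G} {τ : ∀ y : G, x ⟶ y}

lemma globalize_mem_invA [Fintype G] (hθ : θ.IsUnital e) (hd : θ.IsDirectSum)
    (hτ : ∀ y, θ.IsFull (τ y)) {a : A} (ha : a ∈ invX θ e x) : θ.globalize e τ a ∈ invA θ e := by
  refine mem_invA_iff.2 fun {y z} g => ?_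
  set h : x ⟶ x := τ y ≫ g ≫ Groupoid.inv (τ z)
  have hsq : h ≫ τ z = τ y ≫ g := by simp [h]
  calc θ.totalAct e g (θ.globalize e τ a) = θ.totalAct e g (θ.totalAct e (τ y) a) := by
        rw [globalize, hθ.totalAct_sum]
        exact Fintype.sum_eq_single y fun w hw =>
          hθ.totalAct_eq_zero_of_ne hd g hw (hθ.totalAct_mem _ a)
    _ = θ.totalAct e (τ z) (a * e h) := by
        rw [hθ.totalAct_totalAct_of_comp_eq (hτ y) (hτ z) hsq, mem_invX_iff.1 ha h]
    _ = θ.globalize e τ a * e g := by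
        rw [hθ.e_comp_of_isFull (hτ y), ← hθ.totalAct_mul_e, globalize, Finset.sum_mul]
        exact (Fintype.sum_eq_single z fun w hw =>
          hd.mul_eq_zero_of_ne hw (hθ.totalAct_mem _ a) (hθ.e_mem g)).symm

lemma globalize_mul_e_id [Fintype G] (hθ : θ.IsUnital e) (hd : θ.IsDirectSum)
    (hτx : τ x = 𝟙 x) {a : A} (ha : a ∈ θ.D (𝟙 x)) : θ.globalize e τ a * e (𝟙 x) = a := by
  rw [globalize, Finset.sum_mul, Fintype.sum_eq_single x fun w hw =>
    hd.mul_eq_zero_of_ne hw (hθ.totalAct_mem _ a) (hθ.e_mem _), hτx, hθ.totalAct_id,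
    hθ.mul_e_of_mem ha, hθ.mul_e_of_mem ha]

lemma globalize_mul_e_id_of_mem_invA [Fintype G] (hθ : θ.IsUnital e) (hd : θ.IsDirectSum)
    (hτ : ∀ y, θ.IsFull (τ y)) {a : A} (ha : a ∈ invA θ e) :
    θ.globalize e τ (a * e (𝟙 x)) = a :=
  calc θ.globalize e τ (a * e (𝟙 x)) = ∑ y, a * e (𝟙 y) :=
        Finset.sum_congr rfl fun y _ => by
          rw [hθ.totalAct_mul_e_of_mem _ (θ.D_subset_D_id _ (hθ.e_mem _)), mem_invA_iff.1 ha,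
            hθ.e_eq_of_isFull (hτ y)]
    _ = a := hθ.sum_mul_e_id hd a

lemma mul_e_id_mem_invX (hθ : θ.IsUnital e) {a : A} (ha : a ∈ invA θ e) :
    a * e (𝟙 x) ∈ invX θ e x :=
  mem_invX_iff.2 fun h => by
    rw [hθ.totalAct_mul_e_of_mem _ (θ.D_subset_D_id _ (hθ.e_mem _)), mem_invA_iff.1 ha h,
      mul_assoc, hθ.e_mul_of_mem (θ.D_subset_D_id h (hθ.e_mem h))]

lemma localize_mem [Fintype G] (hθ : θ.IsUnital e) (c : A) : θ.localize e τ c ∈ θ.D (𝟙 x) :=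
  hθ.sum_mem fun _ _ => θ.D_subset_D_id _ (hθ.totalAct_mem _ c)

lemma localize_of_mem [Fintype G] (hθ : θ.IsUnital e) (hd : θ.IsDirectSum)
    (hτx : τ x = 𝟙 x) {c : A} (hc : c ∈ θ.D (𝟙 x)) : θ.localize e τ c = c := by
  rw [localize, Fintype.sum_eq_single x fun y hy =>
    hθ.totalAct_eq_zero_of_ne hd _ (Ne.symm hy) hc, hτx, Groupoid.inv_id, hθ.totalAct_id,
    hθ.mul_e_of_mem hc]

lemma traceA_mul_e_id [Fintype G] [∀ y z : G, Fintype (y ⟶ z)] (hθ : θ.IsUnital e)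
    (hd : θ.IsDirectSum) (hτ : ∀ y, θ.IsFull (τ y)) (c : A) :
    traceA θ e c * e (𝟙 x) = traceX θ e x (θ.localize e τ c) :=
  calc traceA θ e c * e (𝟙 x) = ∑ w, ∑ g : w ⟶ x, θ.totalAct e g c := by
        rw [hθ.traceA_mul_e hd]
        exact Finset.sum_congr rfl fun w _ => Finset.sum_congr rfl fun g _ =>
          hθ.mul_e_of_mem (θ.D_subset_D_id g (hθ.totalAct_mem g c))
    _ = ∑ w, ∑ h : x ⟶ x, θ.totalAct e (Groupoid.inv (τ w) ≫ h) c :=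
        Finset.sum_congr rfl fun w _ => (Fintype.sum_equiv
          ((Groupoid.isoEquivHom x w).symm (τ w)).homFromEquiv _ _ fun _ => rfl).symm
    _ = ∑ w, ∑ h : x ⟶ x, θ.totalAct e h (θ.totalAct e (Groupoid.inv (τ w)) c) := by
        refine Finset.sum_congr rfl fun w _ => Finset.sum_congr rfl fun h _ => ?_
        rw [hθ.totalAct_totalAct, hθ.mul_e_of_mem]
        exact (hτ w).inv.D_comp h ▸ hθ.totalAct_mem _ c
    _ = traceX θ e x (θ.localize e τ c) := by
        simp only [traceX_eq, localize, hθ.totalAct_sum]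
        exact Finset.sum_comm

end Traces

section Galois

lemma sum_totalAct_mul_totalAct_of_ne [Fintype G] (hθ : θ.IsUnital e) (hd : θ.IsDirectSum)
    {ι : Type*} [Fintype ι] {a b : ι → A}
    (hnid : ∀ {y z : G} (k : y ⟶ z), ¬ IsId k → ∑ i, a i * θ.totalAct e k (b i) = 0)
    {p q : Mor G} (hpq : p ≠ q) :
    ∑ i, θ.totalAct e p.2.2 (a i) * θ.totalAct e q.2.2 (b i) = 0 := by
  obtain ⟨y, z, g⟩ := p
  obtain ⟨y', z', h⟩ := q
  by_cases hz : z = z'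
  · subst hz
    refine hθ.sum_totalAct_mul_totalAct_eq_zero g h (hnid _ ?_)
    rintro ⟨rfl, hk⟩
    obtain rfl : h = g := by simpa using hk
    exact hpq rfl
  · exact Finset.sum_eq_zero fun i _ =>
      hd.mul_eq_zero_of_ne hz (hθ.totalAct_mem _ _) (hθ.totalAct_mem _ _)

lemma gammaA'_surj_iff [Fintype G] [∀ y z : G, Fintype (y ⟶ z)] (hθ : θ.IsUnital e)
    (hd : θ.IsDirectSum) :
    (∀ r ∈ skewSet θ, ∃ (n : ℕ) (a b : Fin n → A), ∀ p : Mor G,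
      r p = ∑ i, a i * θ.act p.2.2 (b i * e (Groupoid.inv p.2.2))) ↔ GaloisA θ e := by
  classical
  constructor
  · intro hΓ
    obtain ⟨n, a, b, hab⟩ := hΓ (fun p => if IsId p.2.2 then e p.2.2 else 0) fun p => by
      dsimp only
      split_ifs
      exacts [hθ.e_mem _, hθ.zero_mem _]
    refine ⟨n, a, b, fun y => ?_, fun {y z} g hg => ?_⟩
    · exact ((if_pos (isId_id y)).symm.trans (hab ⟨y, y, 𝟙 y⟩)).symm
    · exact ((if_neg hg).symm.trans (hab ⟨y, z, g⟩)).symm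
  · rintro ⟨m, a, b, hid, hnid⟩ r hr
    obtain ⟨n, a', b', -, hsum⟩ := exists_fin_pairs
      (fun pi : Mor G × Fin m => r pi.1 * θ.totalAct e pi.1.2.2 (a pi.2)) (fun pi => b pi.2)
    refine ⟨n, a', b', fun q => Eq.symm ?_⟩
    refine (hsum fun u v => u * θ.totalAct e q.2.2 v).trans ?_
    simp only [Fintype.sum_prod_type, mul_assoc, ← Finset.mul_sum]
    rw [Fintype.sum_eq_single q fun p hpq => by
        rw [hθ.sum_totalAct_mul_totalAct_of_ne hd hnid hpq, mul_zero],
      hθ.sum_totalAct_mul_totalAct_self (hid _), hθ.mul_e_of_mem (hr q)]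

lemma gammaX'_surj_iff [∀ y z : G, Fintype (y ⟶ z)] (hθ : θ.IsUnital e) (x : G) :
    (∀ s : (x ⟶ x) → A, (∀ h : x ⟶ x, s h ∈ θ.D h) →
      ∃ (n : ℕ) (a b : Fin n → A), (∀ i, a i ∈ θ.D (𝟙 x) ∧ b i ∈ θ.D (𝟙 x)) ∧
        ∀ h : x ⟶ x, s h = ∑ i, a i * θ.act h (b i * e (Groupoid.inv h))) ↔
      GaloisX θ e x := by
  classical
  constructor
  · intro hΓ
    obtain ⟨n, a, b, hab, hs⟩ := hΓ (fun h => if h = 𝟙 x then e (𝟙 x) else 0) fun h => by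
      split_ifs with hh
      · subst hh; exact hθ.e_mem _
      · exact hθ.zero_mem _
    exact ⟨n, a, b, hab, ((if_pos rfl).symm.trans (hs (𝟙 x))).symm,
      fun h hh => ((if_neg hh).symm.trans (hs h)).symm⟩
  · rintro ⟨m, a, b, hab, hid, hnid⟩ s hs
    obtain ⟨n, a', b', hab', hsum⟩ := exists_fin_pairs
      (fun gi : (x ⟶ x) × Fin m => s gi.1 * θ.totalAct e gi.1 (a gi.2)) (fun gi => b gi.2)
    refine ⟨n, a', b', fun j => ?_, fun h => Eq.symm ?_⟩
    · obtain ⟨⟨g, i⟩, ha, hb⟩ := hab' j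
      rw [ha, hb]
      exact ⟨hθ.mul_mem_left (θ.D_subset_D_id g (hθ.totalAct_mem g _)) _, (hab i).2⟩
    · refine (hsum fun u v => u * θ.totalAct e h v).trans ?_
      simp only [Fintype.sum_prod_type, mul_assoc, ← Finset.mul_sum]
      rw [Fintype.sum_eq_single h fun g hg => by
          rw [hθ.sum_totalAct_mul_totalAct_eq_zero g h (hnid _ (by simpa using hg.symm)),
            mul_zero],
        hθ.sum_totalAct_mul_totalAct_self hid, hθ.mul_e_of_mem (hs h)]

lemma galoisX_of_galoisA (hθ : θ.IsUnital e) (x : G) (hG : GaloisA θ e) : GaloisX θ e x := by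
  obtain ⟨m, a, b, hid, hnid⟩ := hG
  have hterm : ∀ (h : x ⟶ x) i, a i * e (𝟙 x) * θ.totalAct e h (b i * e (𝟙 x)) =
      a i * θ.totalAct e h (b i) := fun h i => by
    rw [hθ.totalAct_mul_e_of_mem h (θ.D_subset_D_id _ (hθ.e_mem _)), mul_assoc,
      hθ.e_mul_of_mem (θ.D_subset_D_id h (hθ.totalAct_mem h _))]
  refine ⟨m, fun i => a i * e (𝟙 x), fun i => b i * e (𝟙 x),
    fun i => ⟨hθ.mul_e_mem _ _, hθ.mul_e_mem _ _⟩, ?_, fun h hh => ?_⟩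
  · exact (Finset.sum_congr rfl fun i _ => hterm _ i).trans (hid x)
  · exact (Finset.sum_congr rfl fun i _ => hterm h i).trans
      (hnid h fun hh' => hh ((isId_iff_eq_id h).1 hh'))

lemma galoisA_of_galoisX [Fintype G] (hθ : θ.IsUnital e) (hd : θ.IsDirectSum) {x : G}
    {τ : ∀ y : G, x ⟶ y} (hτ : ∀ y, θ.IsFull (τ y)) (hG : GaloisX θ e x) : GaloisA θ e := by
  obtain ⟨m, a, b, -, hid, hnid⟩ := hG
  have hid' : ∑ i, a i * θ.totalAct e (𝟙 x) (b i) = e (𝟙 x) := hid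
  have hnid' : ∀ h : x ⟶ x, h ≠ 𝟙 x → ∑ i, a i * θ.totalAct e h (b i) = 0 := hnid
  obtain ⟨n, a', b', -, hsum⟩ := exists_fin_pairs
    (fun wi : G × Fin m => θ.totalAct e (τ wi.1) (a wi.2))
    (fun wi => θ.totalAct e (τ wi.1) (b wi.2))
  have hsource : ∀ {y z : G} (g : y ⟶ z), ∑ j, a' j * θ.totalAct e g (b' j) =
      ∑ i, θ.totalAct e (τ y) (a i) * θ.totalAct e g (θ.totalAct e (τ y) (b i)) := fun g => by
    rw [hsum fun u v => u * θ.totalAct e g v, Fintype.sum_prod_type]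
    exact Fintype.sum_eq_single _ fun w hw => Finset.sum_eq_zero fun i _ => by
      rw [hθ.totalAct_eq_zero_of_ne hd g hw (hθ.totalAct_mem _ _), mul_zero]
  have hloop : ∀ {y : G} (g : y ⟶ y), ∑ j, a' j * θ.totalAct e g (b' j) =
      θ.totalAct e (τ y)
        (∑ i, a i * θ.totalAct e (τ y ≫ g ≫ Groupoid.inv (τ y)) (b i)) := fun {y} g => by
    rw [hsource, hθ.totalAct_sum]
    refine Finset.sum_congr rfl fun i _ => ?_
    rw [hθ.totalAct_totalAct_of_comp_eq (hτ y) (hτ y) (h := τ y ≫ g ≫ Groupoid.inv (τ y))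
      (by simp), hθ.totalAct_mul]
  refine ⟨n, a', b', fun y => (hloop (𝟙 y)).trans ?_, fun {y z} g hg => ?_⟩
  · rw [Category.id_comp, Groupoid.comp_inv, hid', hθ.totalAct_e_id, hθ.e_eq_of_isFull (hτ y)]
  by_cases hyz : y = z
  · subst hyz
    refine (hloop g).trans ?_
    rw [hnid' _ fun h1 => hg ((isId_iff_eq_id g).2 ?_), totalAct_zero]
    simpa using congrArg (fun k => Groupoid.inv (τ y) ≫ k ≫ τ y) h1
  · exact (hsource g).trans (Finset.sum_eq_zero fun i _ =>
      hd.mul_eq_zero_of_ne hyz (hθ.totalAct_mem _ _) (hθ.totalAct_mem _ _))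

end Galois

section Strict

variable [∀ y z : G, Fintype (y ⟶ z)]

lemma gammaA_surj_iff [Fintype G] (hθ : θ.IsUnital e) (hd : θ.IsDirectSum) :
    (∀ a ∈ invA θ e, ∃ (n : ℕ) (u v : Fin n → A), a = ∑ i, traceA θ e (u i * v i)) ↔
      ∀ a ∈ invA θ e, ∃ c : A, traceA θ e c = a := by
  refine forall₂_congr fun a _ => ⟨?_, ?_⟩
  · rintro ⟨n, u, v, rfl⟩
    exact ⟨∑ i, u i * v i, hθ.traceA_sum _ _⟩
  · rintro ⟨c, rfl⟩
    refine ⟨1, fun _ => c, fun _ => ∑ y, e (𝟙 y), ?_⟩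
    rw [Fin.sum_univ_one, Finset.mul_sum, hθ.sum_mul_e_id hd]

lemma gammaX_surj_iff (hθ : θ.IsUnital e) (x : G) :
    (∀ a ∈ θ.D (𝟙 x), a ∈ invX θ e x → ∃ (n : ℕ) (u v : Fin n → A),
      (∀ i, u i ∈ θ.D (𝟙 x) ∧ v i ∈ θ.D (𝟙 x)) ∧ a = ∑ i, traceX θ e x (u i * v i)) ↔
      ∀ a ∈ θ.D (𝟙 x), a ∈ invX θ e x → ∃ c ∈ θ.D (𝟙 x), traceX θ e x c = a := by
  refine forall₂_congr fun a _ => forall_congr' fun _ => ⟨?_, ?_⟩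
  · rintro ⟨n, u, v, huv, rfl⟩
    exact ⟨∑ i, u i * v i, hθ.sum_mem fun i _ => hθ.mul_mem_right (huv i).1 _,
      hθ.traceX_sum x _ _⟩
  · rintro ⟨c, hc, rfl⟩
    refine ⟨1, fun _ => c, fun _ => e (𝟙 x), fun _ => ⟨hc, hθ.e_mem _⟩, ?_⟩
    rw [Fin.sum_univ_one, hθ.mul_e_of_mem hc]

lemma traceA_surj_iff_traceX_surj [Fintype G] (hθ : θ.IsUnital e) (hd : θ.IsDirectSum)
    {x : G} {τ : ∀ y : G, x ⟶ y} (hτx : τ x = 𝟙 x) (hτ : ∀ y, θ.IsFull (τ y)) :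
    (∀ a ∈ invA θ e, ∃ c : A, traceA θ e c = a) ↔
      ∀ a ∈ θ.D (𝟙 x), a ∈ invX θ e x → ∃ c ∈ θ.D (𝟙 x), traceX θ e x c = a := by
  constructor
  · intro ht a ha hinv
    obtain ⟨c, hc⟩ := ht _ (hθ.globalize_mem_invA hd hτ hinv)
    refine ⟨θ.localize e τ c, hθ.localize_mem c, ?_⟩
    rw [← hθ.traceA_mul_e_id hd hτ, hc, hθ.globalize_mul_e_id hd hτx ha]
  · intro ht a ha
    obtain ⟨c, hcx, hc⟩ := ht _ (hθ.mul_e_mem _ a) (hθ.mul_e_id_mem_invX ha)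
    refine ⟨c, ?_⟩
    rw [← hθ.globalize_mul_e_id_of_mem_invA hd hτ (hθ.traceA_mem_invA hd c),
      hθ.traceA_mul_e_id hd hτ, hθ.localize_of_mem hd hτx hcx, hc,
      hθ.globalize_mul_e_id_of_mem_invA hd hτ ha]

end Strict

end IsUnital

end PartialAction

theorem extension_partial_actions_stmt17
    {G : Type v} [Groupoid G] {A : Type u} [NonUnitalRing A]
    [Fintype G] [∀ y z : G, Fintype (y ⟶ z)]
    (hconn : ∀ a b : G, Nonempty (a ⟶ b))
    (x : G) (τ : ∀ y : G, x ⟶ y) (hτx : τ x = 𝟙 x)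
    (θ : PartialAction G A)
    (e : ∀ {y z : G}, (y ⟶ z) → A)
    (he_idem : ∀ {y z : G} (g : y ⟶ z), e g * e g = e g)
    (he_cent : ∀ {y z : G} (g : y ⟶ z) (b : A), e g * b = b * e g)
    (hDe : ∀ {y z : G} (g : y ⟶ z), θ.D g = {a : A | ∃ b : A, a = b * e g})
    (hgt1 : ∀ y : G, θ.D (Groupoid.inv (τ y)) = θ.D (𝟙 x))
    (hgt2 : ∀ y : G, θ.D (τ y) = θ.D (𝟙 y))
    (horth : ∀ y z : G, y ≠ z → ∀ a ∈ θ.D (𝟙 y), ∀ b ∈ θ.D (𝟙 z), a * b = 0)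
    (hspan : ∀ a : A, ∃ f : G → A, (∀ y : G, f y ∈ θ.D (𝟙 y)) ∧ a = ∑ y : G, f y) :
    ((GaloisA θ e ∧ ∀ a ∈ invA θ e, ∃ c : A, traceA θ e c = a) ↔ StrictA θ e) ∧
    (StrictA θ e ↔ StrictX θ e x) ∧
    (StrictX θ e x ↔
      (GaloisX θ e x ∧ ∀ a ∈ θ.D (𝟙 x), a ∈ invX θ e x →
        ∃ c ∈ θ.D (𝟙 x), traceX θ e x c = a)) := by
  have hθ : θ.IsUnital e := ⟨@he_idem, @he_cent, @hDe⟩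
  have hd : θ.IsDirectSum := ⟨horth, hspan⟩
  have hτ : ∀ y, θ.IsFull (τ y) := fun y => ⟨hgt2 y, hgt1 y⟩
  have hA : StrictA θ e ↔ GaloisA θ e ∧ ∀ a ∈ invA θ e, ∃ c : A, traceA θ e c = a :=
    (and_congr (hθ.gammaA_surj_iff hd) (hθ.gammaA'_surj_iff hd)).trans and_comm
  have hX : StrictX θ e x ↔ GaloisX θ e x ∧ ∀ a ∈ θ.D (𝟙 x), a ∈ invX θ e x →
      ∃ c ∈ θ.D (𝟙 x), traceX θ e x c = a :=
    (and_congr (hθ.gammaX_surj_iff x) (hθ.gammaX'_surj_iff x)).trans and_comm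
  have hAX := and_congr ⟨hθ.galoisX_of_galoisA x, hθ.galoisA_of_galoisX hd hτ⟩
    (hθ.traceA_surj_iff_traceX_surj hd hτx hτ)
  exact ⟨hA.symm, hA.trans (hAX.trans hX.symm), hX⟩
end
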